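/- In the set-cover instance game with the non-deterministic greedy algorithm, with m > n and α < β/2, no pure Nash equilibrium exists in which every agent's strategy has cardinality at most 1 and some element of U is chosen by at most one agent while some agent has an empty strategy. -/

import Mathlib

open Finset

section SCIG

variable {α : Type*} [DecidableEq α] {m : ℕ}

/-- Inner loop of the greedy algorithm: scan the remaining order, keeping the
subset covering the most as-yet-uncovered elements (ties broken by order). -/
def bestIdx (S : Fin m → Finset α) (Ucov : Finset α) : List (Fin m) → Fin m → Fin m
  | [], b => b
  | i :: rest, b =>
      bestIdx S Ucov rest (if (S b ∩ Ucov).card < (S i ∩ Ucov).card then i else b)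

/-- Greedy set-cover: repeatedly select the subset (scanned in `order`) covering
the most uncovered elements, until nothing new can be covered.  Returns the
selected agents, in order of selection. -/
def greedyList (S : Fin m → Finset α) (order : List (Fin m)) (Ucov : Finset α) :
    List (Fin m) :=
  match order with
  | [] => []
  | b :: rest =>
    let best := bestIdx S Ucov rest b
    if h : (S best ∩ Ucov).Nonempty then
      best :: greedyList S (b :: rest) (Ucov \ S best)
    else []
termination_by Ucov.card
decreasing_by
  apply Finset.card_lt_card
  refine ⟨Finset.sdiff_subset, fun hsub => ?_⟩
  obtain ⟨x, hx⟩ := h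
  have hx1 := (Finset.mem_inter.mp hx).1
  have hx2 := (Finset.mem_inter.mp hx).2
  have := hsub hx2
  simp [Finset.mem_sdiff, hx1] at this
  exact this.2 hx1

/-- The set-cover instance induced by a joint strategy: its universe. -/
def unionSet (S : Fin m → Finset α) : Finset α := Finset.univ.biUnion S

/-- The cover computed by the deterministic greedy algorithm (fixed order 1..m). -/
def coverD (S : Fin m → Finset α) : Finset (Fin m) :=
  (greedyList S (List.finRange m) (unionSet S)).toFinset

/-- Utility of agent `i` in the deterministic game. -/
noncomputable def utilD (beta alpha : ℝ) (S : Fin m → Finset α) (i : Fin m) : ℝ :=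
  (if i ∈ coverD S then beta else 0) - alpha * (S i).card

/-- Pure Nash equilibrium of the deterministic game. -/
def IsNashD (beta alpha : ℝ) (S : Fin m → Finset α) : Prop :=
  ∀ (i : Fin m) (T : Finset α),
    utilD beta alpha (Function.update S i T) i ≤ utilD beta alpha S i

/-- Probability (over a uniformly random permutation of the agents) that agent
`i`'s subset is selected by the non-deterministic greedy algorithm. -/
noncomputable def probSel (S : Fin m → Finset α) (i : Fin m) : ℝ :=
  (Finset.univ.filter (fun π : Equiv.Perm (Fin m) =>
      i ∈ greedyList S ((List.finRange m).map π) (unionSet S))).card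
    / (Nat.factorial m)

/-- Expected utility of agent `i` in the non-deterministic game. -/
noncomputable def utilN (beta alpha : ℝ) (S : Fin m → Finset α) (i : Fin m) : ℝ :=
  beta * probSel S i - alpha * (S i).card

/-- Pure Nash equilibrium of the non-deterministic game. -/
def IsNashN (beta alpha : ℝ) (S : Fin m → Finset α) : Prop :=
  ∀ (i : Fin m) (T : Finset α),
    utilN beta alpha (Function.update S i T) i ≤ utilN beta alpha S i

end SCIG


/-!
An agent with an empty strategy is never selected, so its utility is `0`. If it deviates to
`{e}`, where `e` is an element chosen by at most one other agent `j`, then every strategy still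
has at most one uncovered element at each round, and greedy selects, for every element, the
first agent in the order holding it. Hence the deviating agent is selected whenever it precedes
`j`, i.e. for half of all orders, and its utility becomes at least `β/2 - α > 0`.
-/

section Greedy

variable {α : Type*} [DecidableEq α] {m : ℕ} (S : Fin m → Finset α)

theorem card_sdiff_lt_of_inter_nonempty {U T : Finset α} (h : (T ∩ U).Nonempty) :
    (U \ T).card < U.card :=
  card_lt_card (sdiff_lt_left.2 (not_disjoint_iff_nonempty_inter.2 (inter_comm T U ▸ h)))

section BestIdx

variable (U : Finset α)

theorem card_inter_le_bestIdx_of_mem :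
    ∀ (l : List (Fin m)) (b j : Fin m), j ∈ b :: l →
      (S j ∩ U).card ≤ (S (bestIdx S U l b) ∩ U).card
  | [], b, j, hj => by rw [List.mem_singleton.1 hj]; rfl
  | i :: rest, b, j, hj => by
      simp only [bestIdx]
      obtain rfl | rfl | hj := List.mem_cons.1 hj |>.imp_right List.mem_cons.1
      · split_ifs with h
        · exact h.le.trans (card_inter_le_bestIdx_of_mem rest i i List.mem_cons_self)
        · exact card_inter_le_bestIdx_of_mem rest j j List.mem_cons_self
      · split_ifs with h
        · exact card_inter_le_bestIdx_of_mem rest j j List.mem_cons_self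
        · exact (not_lt.1 h).trans (card_inter_le_bestIdx_of_mem rest b b List.mem_cons_self)
      · split_ifs
        · exact card_inter_le_bestIdx_of_mem rest i j (List.mem_cons_of_mem _ hj)
        · exact card_inter_le_bestIdx_of_mem rest b j (List.mem_cons_of_mem _ hj)

theorem bestIdx_mem : ∀ (l : List (Fin m)) (b : Fin m), bestIdx S U l b ∈ b :: l
  | [], _ => List.mem_singleton_self _
  | i :: rest, b => by
      simp only [bestIdx]
      split_ifs
      · exact List.mem_cons_of_mem _ (bestIdx_mem rest i)
      · rcases List.mem_cons.1 (bestIdx_mem rest b) with h | h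
        · exact List.mem_cons.2 (Or.inl h)
        · exact List.mem_cons_of_mem _ (List.mem_cons_of_mem _ h)

theorem bestIdx_eq_of_forall_card_inter_le {b : Fin m}
    (hb : ∀ k, (S k ∩ U).card ≤ (S b ∩ U).card) : ∀ l : List (Fin m), bestIdx S U l b = b
  | [] => rfl
  | i :: rest => by
      rw [bestIdx, if_neg (not_lt.2 (hb i))]
      exact bestIdx_eq_of_forall_card_inter_le hb rest

theorem bestIdx_append :
    ∀ (l₁ l₂ : List (Fin m)) (b : Fin m),
      bestIdx S U (l₁ ++ l₂) b = bestIdx S U l₂ (bestIdx S U l₁ b)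
  | [], _, _ => rfl
  | _ :: rest, l₂, _ => bestIdx_append rest l₂ _

theorem greedyList_cons (b : Fin m) (rest : List (Fin m)) :
    greedyList S (b :: rest) U =
      if (S (bestIdx S U rest b) ∩ U).Nonempty then
        bestIdx S U rest b :: greedyList S (b :: rest) (U \ S (bestIdx S U rest b))
      else [] := by
  rw [greedyList]; rfl

end BestIdx

theorem nonempty_of_mem_greedyList {U : Finset α} {order : List (Fin m)} {i : Fin m}
    (h : i ∈ greedyList S order U) : (S i).Nonempty := by
  match order with
  | [] => simp [greedyList] at h
  | b :: rest =>
    rw [greedyList_cons] at h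
    split_ifs at h with hne
    · rcases List.mem_cons.1 h with rfl | h
      · exact hne.mono inter_subset_left
      · exact nonempty_of_mem_greedyList h
    · exact absurd h List.not_mem_nil
termination_by U.card
decreasing_by exact card_sdiff_lt_of_inter_nonempty hne

variable {S}

/-- An agent holding exactly one uncovered element is beaten by no agent scanned after it. -/
theorem bestIdx_mem_of_card_inter_le_one {U : Finset α} (hmax : ∀ k, (S k ∩ U).card ≤ 1)
    {i b : Fin m} {l : List (Fin m)} (hi : (S i ∩ U).card = 1) (hil : i ∈ b :: l) (post : List (Fin m)) :
    bestIdx S U (l ++ post) b ∈ b :: l ∧ (S (bestIdx S U (l ++ post) b) ∩ U).Nonempty := by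
  have hwin : (S i ∩ U).card ≤ (S (bestIdx S U l b) ∩ U).card :=
    card_inter_le_bestIdx_of_mem S U l b i hil
  rw [bestIdx_append, bestIdx_eq_of_forall_card_inter_le S U (fun k => (hmax k).trans (hi ▸ hwin))]
  exact ⟨bestIdx_mem S U l b, card_pos.1 (by omega)⟩

theorem mem_greedyList_of_card_inter_le_one {U : Finset α} {i : Fin m} {e : α}
    (hS : S i = {e}) (heU : e ∈ U) (hmax : ∀ k, (S k ∩ U).card ≤ 1) {pre : List (Fin m)}
    (hpre : ∀ k ∈ pre, e ∉ S k) (post : List (Fin m)) :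
    i ∈ greedyList S (pre ++ i :: post) U := by
  obtain ⟨b, l, hbl⟩ := List.exists_cons_of_ne_nil (List.append_ne_nil_of_right_ne_nil pre
    (List.cons_ne_nil i []))
  have horder : pre ++ i :: post = b :: (l ++ post) := by
    rw [← List.cons_append, ← hbl, List.append_assoc, List.singleton_append]
  have hi : (S i ∩ U).card = 1 := by rw [hS, singleton_inter_of_mem heU, card_singleton]
  obtain ⟨hbest, hne⟩ := bestIdx_mem_of_card_inter_le_one hmax hi
    (hbl ▸ List.mem_append_right pre (List.mem_singleton_self i)) post
  rw [horder, greedyList_cons, if_pos hne]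
  by_cases hbi : bestIdx S U (l ++ post) b = i
  · exact hbi ▸ List.mem_cons_self
  have heb : e ∉ S (bestIdx S U (l ++ post) b) := by
    rcases List.mem_append.1 (hbl ▸ hbest) with h | h
    · exact hpre _ h
    · exact absurd (List.mem_singleton.1 h) hbi
  rw [← horder]
  exact List.mem_cons_of_mem _ (mem_greedyList_of_card_inter_le_one hS (mem_sdiff.2 ⟨heU, heb⟩)
    (fun k => (card_le_card (inter_subset_inter_left sdiff_subset)).trans (hmax k)) hpre post)
termination_by U.card
decreasing_by exact card_sdiff_lt_of_inter_nonempty hne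

end Greedy

section Permutations

variable {m : ℕ}

theorem map_finRange_eq_take_append_cons_drop (π : Equiv.Perm (Fin m)) (k : Fin m) :
    (List.finRange m).map π =
      ((List.finRange m).map π).take (π.symm k) ++
        k :: ((List.finRange m).map π).drop (π.symm k + 1) := by
  have hk : (π.symm k : ℕ) < ((List.finRange m).map π).length := by simp
  have hget : ((List.finRange m).map π)[(π.symm k : ℕ)] = k := by simp
  conv_lhs => rw [← List.take_append_drop (π.symm k : ℕ) ((List.finRange m).map π)]
  rw [← List.getElem_cons_drop hk, hget]

theorem symm_lt_of_mem_take_map_finRange {π : Equiv.Perm (Fin m)} {k : Fin m} {n : ℕ}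
    (h : k ∈ ((List.finRange m).map π).take n) : (π.symm k : ℕ) < n := by
  obtain ⟨t, ht, rfl⟩ := List.mem_take_iff_getElem.1 h
  simpa using lt_min_iff.1 ht |>.1

end Permutations

theorem Equiv.Perm.two_mul_card_filter_symm_lt {ι : Type*} [Fintype ι] [LinearOrder ι]
    {i j : ι} (hij : i ≠ j) :
    2 * #{π : Equiv.Perm ι | π.symm i < π.symm j} = Fintype.card (Equiv.Perm ι) := by
  have hswap : #{π : Equiv.Perm ι | π.symm i < π.symm j} =
      #{π : Equiv.Perm ι | ¬ π.symm i < π.symm j} := by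
    refine card_nbij' (fun π => π.trans (Equiv.swap i j)) (fun π => π.trans (Equiv.swap i j))
      ?_ ?_ ?_ ?_ <;>
      simp only [coe_filter, Set.mem_ofPred_eq, mem_univ, true_and, not_lt, Set.MapsTo,
        Set.LeftInvOn, Equiv.symm_trans_apply, Equiv.symm_swap, Equiv.swap_apply_left,
        Equiv.swap_apply_right]
    · exact fun π hπ => hπ.le
    · exact fun π hπ => hπ.lt_of_ne (π.symm.injective.ne hij.symm)
    · intro π _; ext; simp
    · intro π _; ext; simp
  rw [two_mul]
  nth_rw 2 [hswap]
  rw [card_filter_add_card_filter_not, card_univ]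

section Game

variable {α : Type*} [DecidableEq α] {m : ℕ} {S : Fin m → Finset α}

theorem probSel_eq_zero_of_eq_empty {i : Fin m} (hi : S i = ∅) : probSel S i = 0 := by
  have hnever : ∀ π : Equiv.Perm (Fin m),
      i ∉ greedyList S ((List.finRange m).map π) (unionSet S) := fun π hπ =>
    (nonempty_of_mem_greedyList S hπ).ne_empty hi
  simp [probSel, hnever]

theorem mem_greedyList_of_forall_symm_lt {i : Fin m} {e : α} (hS : S i = {e})
    (hcard : ∀ k, (S k).card ≤ 1) {π : Equiv.Perm (Fin m)}
    (hfirst : ∀ k ≠ i, e ∈ S k → π.symm i < π.symm k) :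
    i ∈ greedyList S ((List.finRange m).map π) (unionSet S) := by
  rw [map_finRange_eq_take_append_cons_drop π i]
  refine mem_greedyList_of_card_inter_le_one hS
    (mem_biUnion.2 ⟨i, mem_univ i, hS ▸ mem_singleton_self e⟩)
    (fun k => (card_le_card inter_subset_left).trans (hcard k)) (fun k hk hek => ?_) _
  have hlt := symm_lt_of_mem_take_map_finRange hk
  have hki : k ≠ i := by rintro rfl; exact lt_irrefl _ hlt
  exact absurd (hfirst k hki hek) (not_lt.2 (Fin.le_def.2 hlt.le))

theorem one_half_le_probSel {i : Fin m} {e : α} (hS : S i = {e})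
    (hcard : ∀ k, (S k).card ≤ 1) (hshare : (({k | e ∈ S k} : Finset (Fin m)).erase i).card ≤ 1) :
    1 / 2 ≤ probSel S i := by
  set rivals := ({k | e ∈ S k} : Finset (Fin m)).erase i
  have hsel : ∀ π : Equiv.Perm (Fin m), (∀ k ∈ rivals, π.symm i < π.symm k) →
      i ∈ greedyList S ((List.finRange m).map π) (unionSet S) := fun π h =>
    mem_greedyList_of_forall_symm_lt hS hcard fun k hki hek => h k (by simp [rivals, hki, hek])
  have hcount : Nat.factorial m ≤ 2 * #{π : Equiv.Perm (Fin m) |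
      i ∈ greedyList S ((List.finRange m).map π) (unionSet S)} := by
    have hperm : Fintype.card (Equiv.Perm (Fin m)) = m.factorial := by
      rw [Fintype.card_perm, Fintype.card_fin]
    rw [← hperm]
    obtain hempty | ⟨j, hj⟩ := (Nat.le_one_iff_eq_zero_or_eq_one.1 hshare).imp card_eq_zero.1
      card_eq_one.1
    · rw [filter_true_of_mem fun π _ => hsel π (by simp [hempty]), card_univ]
      omega
    · have hji : j ≠ i := fun h => by simpa [h, rivals] using hj.ge (mem_singleton_self j)
      rw [← Equiv.Perm.two_mul_card_filter_symm_lt hji.symm]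
      exact Nat.mul_le_mul_left 2 (card_le_card fun π hπ => by
        simp only [mem_filter, mem_univ, true_and] at hπ ⊢
        exact hsel π (by simpa [hj] using hπ))
  rw [probSel, le_div_iff₀ (by positivity), one_div, inv_mul_le_iff₀ two_pos]
  exact_mod_cast hcount

end Game

theorem scigN_no_sparse_nash_general {α : Type*} [DecidableEq α] {m : ℕ}
    (beta alpha : ℝ) (hbeta : 0 < beta)
    (hab : alpha < beta / 2)
    (S : Fin m → Finset α) :
    ¬ (IsNashN beta alpha S ∧ (∀ i : Fin m, (S i).card ≤ 1) ∧
        (∃ e : α, (Finset.univ.filter (fun i : Fin m => e ∈ S i)).card ≤ 1) ∧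
        (∃ i : Fin m, S i = ∅)) := by
  rintro ⟨hnash, hcard, ⟨e, he⟩, i, hi⟩
  set S' := Function.update S i {e}
  have hS'i : S' i = {e} := Function.update_self i {e} S
  have hcard' : ∀ k, (S' k).card ≤ 1 := by
    intro k
    rcases eq_or_ne k i with rfl | hk
    · simp [hS'i]
    · simpa [S', Function.update_of_ne hk] using hcard k
  have hshare : (({k | e ∈ S' k} : Finset (Fin m)).erase i).card ≤ 1 := by
    refine (card_le_card fun k hk => ?_).trans he
    obtain ⟨hki, hk⟩ := mem_erase.1 hk
    simpa [S', Function.update_of_ne hki] using hk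
  have hhalf := one_half_le_probSel hS'i hcard' hshare
  have hdeviate : utilN beta alpha S' i ≤ utilN beta alpha S i := hnash i {e}
  simp only [utilN, probSel_eq_zero_of_eq_empty hi, hi, hS'i, card_singleton, card_empty,
    Nat.cast_one, Nat.cast_zero, mul_one, mul_zero, sub_zero] at hdeviate
  nlinarith

/-- With the non-deterministic greedy algorithm, m > n and
α < β/2, there is no pure Nash equilibrium in which all strategies have
cardinality at most 1, some element is chosen by at most one agent, and some
agent has an empty strategy. -/
theorem scigN_no_sparse_nash {α : Type*} [Fintype α] [DecidableEq α] {m : ℕ}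
    (beta alpha : ℝ) (hbeta : 0 < beta) (halpha : 0 < alpha)
    (hmn : Fintype.card α < m) (hab : alpha < beta / 2)
    (S : Fin m → Finset α) :
    ¬ (IsNashN beta alpha S ∧ (∀ i : Fin m, (S i).card ≤ 1) ∧
        (∃ e : α, (Finset.univ.filter (fun i : Fin m => e ∈ S i)).card ≤ 1) ∧
        (∃ i : Fin m, S i = ∅)) :=
  scigN_no_sparse_nash_general beta alpha hbeta hab S
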